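/- Consider the partial feedback card guessing game with deck S_{m,n}: a uniformly random π ∈ S_{m,n} is drawn, and at each step t the guesser guesses a card type and is told only whether the guess was correct (i.e., whether the guess equals π_t). For any history h_{t-1} of guesses and correct/incorrect feedback up to time t-1 with positive probability, and any card type i ∈ {1, ..., n}, we have Pr[π_t = i | H_{t-1} = h_{t-1}] ≤ m_i(h_{t-1}) / (mn - a_i(h_{t-1}) - Y(h_{t-1})), provided the denominator is positive. -/

import Mathlib

/-- The finset of words of length `m * n` over `Fin n` where each letter appears
exactly `m` times (the deck `S_{m,n}`). -/
def wordFinset (m n : ℕ) : Finset (Fin (m * n) → Fin n) :=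
  Finset.univ.filter
    (fun w => ∀ i : Fin n, (Finset.univ.filter (fun p => w p = i)).card = m)

/-- Given a (deterministic adaptive) strategy `G` mapping feedback histories to guesses,
`guessesOf n G y` is the sequence of guesses made when the feedback received is `y`. -/
def guessesOf (n : ℕ) (G : List Bool → Fin n) (y : List Bool) : List (Fin n) :=
  (List.range y.length).map (fun s => G (y.take s))

/-- `fb m n G w t` is the list of feedback bits received during the first `t` steps of the
partial feedback game when the deck is `w` and the guesser plays strategy `G`. -/
def fb (m n : ℕ) (G : List Bool → Fin n) (w : Fin (m * n) → Fin n) : ℕ → List Bool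
  | 0 => []
  | t + 1 =>
    fb m n G w t ++ [if h : t < m * n then decide (w ⟨t, h⟩ = G (fb m n G w t)) else true]

/-!
Call a position a candidate for `i` if the history neither reveals its card (a correct guess)
nor rules out `i` there (a wrong guess of `i`). Every other position lies in the past and is
counted by `Y` or by `a_i`, so there are at least `mn - a_i - Y` candidates. A deck consistent
with the history has its `m - m_i` found copies of `i` outside the candidates, hence at most
`m_i` copies on them. For a candidate `p`, swapping the cards at positions `t` and `p` maps the
consistent decks with `π_t = i` injectively to consistent decks with `π_p = i`: the history sees
`π_p` only through the feedback `π_p ≠ g_p`, and `g_p ≠ i`. Double counting the pairs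
(consistent deck, candidate position holding `i`) gives
`#{π_t = i} * #candidates ≤ #consistent * m_i`.
-/

open Finset

section History

variable {m n : ℕ} (G : List Bool → Fin n) (w : Fin (m * n) → Fin n)

lemma length_fb (t : ℕ) : (fb m n G w t).length = t := by
  induction t with
  | zero => rfl
  | succ t ih => simp [fb, ih]

lemma take_fb {s t : ℕ} (h : s ≤ t) : (fb m n G w t).take s = fb m n G w s := by
  induction t with
  | zero => rw [Nat.le_zero.1 h]; rfl
  | succ t ih =>
    rcases h.lt_or_eq with h | rfl
    · rw [fb, List.take_append_of_le_length (by rw [length_fb]; omega), ih (by omega)]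
    · exact List.take_of_length_le (length_fb G w _).le

lemma getD_fb (p : Fin (m * n)) {t : ℕ} (hp : p.val < t) :
    (fb m n G w t).getD p false = decide (w p = G (fb m n G w p)) := by
  induction t with
  | zero => omega
  | succ t ih =>
    rw [fb]
    rcases (Nat.lt_succ_iff.1 hp).lt_or_eq with hp | hp
    · rw [List.getD_append _ _ _ _ (by rwa [length_fb]), ih hp]
    · rw [List.getD_append_right _ _ _ _ (by rw [length_fb]; omega)]
      simp [length_fb, ← hp]

theorem fb_length_eq_iff {y : List Bool} (hy : y.length ≤ m * n) :
    fb m n G w y.length = y ↔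
      ∀ p : Fin (m * n), p.val < y.length → y.getD p false = decide (w p = G (y.take p)) := by
  constructor
  · rintro hw p hp
    rw [← hw, getD_fb G w p hp, take_fb G w hp.le]
  · intro h
    suffices ∀ u ≤ y.length, fb m n G w u = y.take u by simpa using this _ le_rfl
    intro u hu
    induction u with
    | zero => simp [fb]
    | succ u ih =>
      rw [fb, ih (by omega), dif_pos (by omega), ← List.take_concat_get' y u (by omega),
        ← h ⟨u, by omega⟩ (by simp; omega), List.getD_eq_getElem]

end History

lemma comp_perm_mem_wordFinset {m n : ℕ} {w : Fin (m * n) → Fin n} (hw : w ∈ wordFinset m n)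
    (σ : Equiv.Perm (Fin (m * n))) : w ∘ σ ∈ wordFinset m n := by
  simp only [wordFinset, mem_filter, mem_univ, true_and, Function.comp_apply] at hw ⊢
  intro j
  exact (card_bij' (fun p _ => σ p) (fun p _ => σ.symm p) (by simp) (by simp) (by simp)
    (by simp)).trans (hw j)

section Positions

variable (m n : ℕ) (G : List Bool → Fin n) (y : List Bool) (i : Fin n)

def foundPositions : Finset (Fin (m * n)) :=
  {p | p.val < y.length ∧ y.getD p false = true ∧ G (y.take p) = i}

def candidatePositions : Finset (Fin (m * n)) :=
  {p | ¬(p.val < y.length ∧ (y.getD p false = true ∨ G (y.take p) = i))}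

variable {m n G y i} {w : Fin (m * n) → Fin n}

lemma foundPositions_subset (hy : y.length ≤ m * n) (hw : fb m n G w y.length = y) :
    foundPositions m n G y i ⊆ ({p | w p = i} : Finset _) := by
  intro p hp
  simp only [foundPositions, mem_filter, mem_univ, true_and] at hp ⊢
  obtain ⟨hpy, hcorrect, hguess⟩ := hp
  have := (fb_length_eq_iff G w hy).1 hw p hpy
  rw [hcorrect, eq_comm, decide_eq_true_iff] at this
  rw [this, hguess]

lemma card_filter_candidatePositions_le (hy : y.length ≤ m * n) (hwS : w ∈ wordFinset m n)
    (hw : fb m n G w y.length = y) :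
    #{p ∈ candidatePositions m n G y i | w p = i} ≤ m - #(foundPositions m n G y i) := by
  have hsub : {p ∈ candidatePositions m n G y i | w p = i} ⊆
      ({p | w p = i} : Finset _) \ foundPositions m n G y i := by
    intro p hp
    simp only [candidatePositions, foundPositions, mem_filter, mem_sdiff, mem_univ,
      true_and] at hp ⊢
    exact ⟨hp.2, fun hf => hp.1 ⟨hf.1, Or.inl hf.2.1⟩⟩
  calc #{p ∈ candidatePositions m n G y i | w p = i}
      ≤ #(({p | w p = i} : Finset _) \ foundPositions m n G y i) := card_le_card hsub
    _ = m - #(foundPositions m n G y i) := by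
      rw [card_sdiff_of_subset (foundPositions_subset hy hw),
        (mem_filter.1 hwS).2 i]

lemma fb_comp_swap (hy : y.length < m * n) (hw : fb m n G w y.length = y)
    (hwi : w ⟨y.length, hy⟩ = i) {p : Fin (m * n)} (hp : p ∈ candidatePositions m n G y i) :
    fb m n G (w ∘ Equiv.swap p ⟨y.length, hy⟩) y.length = y := by
  rw [fb_length_eq_iff G _ hy.le] at hw ⊢
  intro q hq
  have hqT : q ≠ ⟨y.length, hy⟩ := fun h => by simp [h] at hq
  by_cases hqp : q = p
  · subst hqp
    simp only [candidatePositions, mem_filter, mem_univ, true_and, not_and, not_or] at hp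
    obtain ⟨hwrong, hguess⟩ := hp hq
    simp only [Function.comp_apply, Equiv.swap_apply_left, hwi, Bool.not_eq_true] at hwrong ⊢
    rw [hwrong, decide_eq_false (Ne.symm hguess)]
  · rw [Function.comp_apply, Equiv.swap_apply_of_ne_of_ne hqp hqT]
    exact hw q hq

variable (G y i)

theorem card_filter_apply_le_of_mem_candidatePositions (T : ℕ) (hT : T < m * n)
    (hyT : y.length = T) {p : Fin (m * n)} (hp : p ∈ candidatePositions m n G y i) :
    #{w ∈ wordFinset m n | fb m n G w T = y ∧ w ⟨T, hT⟩ = i} ≤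
      #{w ∈ wordFinset m n | fb m n G w T = y ∧ w p = i} := by
  subst hyT
  refine card_le_card_of_injOn (· ∘ Equiv.swap p ⟨y.length, hT⟩) ?_
    (Equiv.swap p _).surjective.injective_comp_right.injOn
  intro w hw
  simp only [coe_filter, Set.mem_ofPred_eq] at hw ⊢
  obtain ⟨hwS, hw, hwi⟩ := hw
  exact ⟨comp_perm_mem_wordFinset hwS _, fb_comp_swap hT hw hwi hp, by simpa using hwi⟩

theorem card_mul_card_candidatePositions_le (T : ℕ) (hT : T < m * n) (hyT : y.length = T) :
    #{w ∈ wordFinset m n | fb m n G w T = y ∧ w ⟨T, hT⟩ = i} *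
        #(candidatePositions m n G y i) ≤
      #{w ∈ wordFinset m n | fb m n G w T = y} * (m - #(foundPositions m n G y i)) := by
  rw [mul_comm]
  refine card_mul_le_card_mul (fun p w => w p = i) (fun p hp => ?_) (fun w hw => ?_)
  · rw [bipartiteAbove, filter_filter]
    exact card_filter_apply_le_of_mem_candidatePositions G y i T hT hyT hp
  · subst hyT
    obtain ⟨hwS, hw⟩ := mem_filter.1 hw
    exact card_filter_candidatePositions_le hT.le hwS hw

end Positions

section Counting

lemma List.countP_map_range {α : Type*} (f : ℕ → α) (p : α → Bool) (T : ℕ) :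
    ((List.range T).map f).countP p = Nat.count (fun k => p (f k)) T := by
  simp [List.countP_map, Nat.count, Function.comp_def]

lemma List.map_range_getD {α : Type*} (l : List α) (d : α) :
    (List.range l.length).map (l.getD · d) = l := by
  apply List.ext_getElem <;> simp +contextual

lemma card_filter_val_lt_eq_count {M T : ℕ} (hT : T ≤ M) (P : ℕ → Prop) [DecidablePred P] :
    #{p : Fin M | p.val < T ∧ P p} = Nat.count P T := by
  rw [Nat.count_eq_card_filter_range]
  refine card_bij (fun p _ => p.val) (by simp) (fun _ _ _ _ => Fin.ext) fun k hk => ?_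
  simp only [mem_filter, mem_range] at hk
  exact ⟨⟨k, by omega⟩, by simpa using hk, rfl⟩

lemma List.countP_id_eq_count (y : List Bool) :
    y.countP id = Nat.count (fun k => y.getD k false = true) y.length := by
  conv_lhs => rw [← y.map_range_getD false]
  rw [List.countP_map_range]
  rfl

variable (m : ℕ) {n : ℕ} (G : List Bool → Fin n) (y : List Bool) (i : Fin n)

lemma countP_guessesOf :
    (guessesOf n G y).countP (fun g => decide (g = i)) =
      Nat.count (fun k => G (y.take k) = i) y.length := by
  rw [guessesOf, List.countP_map_range]
  simp

lemma countP_zip_guessesOf :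
    ((guessesOf n G y).zip y).countP (fun q => decide (q.1 = i) && q.2) =
      Nat.count (fun k => y.getD k false = true ∧ G (y.take k) = i) y.length := by
  have : (guessesOf n G y).zip y =
      (List.range y.length).map (fun k => (G (y.take k), y.getD k false)) := by
    apply List.ext_getElem <;> simp +contextual [guessesOf]
  rw [this, List.countP_map_range]
  simp [and_comm]

lemma card_foundPositions (hy : y.length ≤ m * n) :
    #(foundPositions m n G y i) =
      ((guessesOf n G y).zip y).countP (fun q => decide (q.1 = i) && q.2) := by
  rw [countP_zip_guessesOf, ← card_filter_val_lt_eq_count hy, foundPositions]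

lemma le_card_candidatePositions (hy : y.length ≤ m * n) :
    m * n ≤ #(candidatePositions m n G y i) +
      ((guessesOf n G y).countP (fun g => decide (g = i)) + y.countP id) := by
  rw [countP_guessesOf, List.countP_id_eq_count, ← card_filter_val_lt_eq_count hy,
    ← card_filter_val_lt_eq_count hy, candidatePositions]
  have hsplit := card_filter_add_card_filter_not (s := univ)
    fun p : Fin (m * n) => p.val < y.length ∧ (y.getD p false = true ∨ G (y.take p) = i)
  have hunion := card_union_le
    {p : Fin (m * n) | p.val < y.length ∧ y.getD p false = true}
    {p : Fin (m * n) | p.val < y.length ∧ G (y.take p) = i}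
  rw [← filter_or] at hunion
  simp only [← and_or_left, card_univ, Fintype.card_fin] at hunion hsplit
  omega

end Counting

theorem stmt_16 (m n : ℕ) (G : List Bool → Fin n)
    (t : ℕ) (ht1 : 1 ≤ t) (ht2 : t ≤ m * n) (y : List Bool)
    (i : Fin n)
    -- the denominator `mn - a_i - Y` is positive:
    (hden : (guessesOf n G y).countP (fun g => decide (g = i)) + y.countP id < m * n) :
    (((wordFinset m n).filter
          (fun w => fb m n G w (t - 1) = y ∧ w ⟨t - 1, by omega⟩ = i)).card : ℝ) /
        (((wordFinset m n).filter (fun w => fb m n G w (t - 1) = y)).card : ℝ) ≤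
      ((m - ((guessesOf n G y).zip y).countP (fun q => decide (q.1 = i) && q.2) : ℕ) : ℝ) /
        ((m * n : ℝ) - (guessesOf n G y).countP (fun g => decide (g = i)) - y.countP id) := by
  set a := (guessesOf n G y).countP (fun g => decide (g = i))
  set Y := y.countP id
  set c := ((guessesOf n G y).zip y).countP (fun q => decide (q.1 = i) && q.2)
  set hits :=
    (wordFinset m n).filter (fun w => fb m n G w (t - 1) = y ∧ w ⟨t - 1, by omega⟩ = i)
  set consistent := (wordFinset m n).filter (fun w => fb m n G w (t - 1) = y)
  have hden' : (0 : ℝ) < m * n - a - Y := by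
    have : ((a + Y : ℕ) : ℝ) < ((m * n : ℕ) : ℝ) := Nat.cast_lt.2 hden
    push_cast at this
    linarith
  rcases consistent.eq_empty_or_nonempty with hempty | ⟨w, hw⟩
  · rw [hempty, card_empty, Nat.cast_zero, div_zero]
    positivity
  have hy : y.length = t - 1 := by rw [← (mem_filter.1 hw).2, length_fb]
  have hcount := card_mul_card_candidatePositions_le (m := m) G y i (t - 1) (by omega) hy
  rw [card_foundPositions m G y i (by omega)] at hcount
  have hcand : (m * n : ℝ) - a - Y ≤ #(candidatePositions m n G y i) := by
    have := Nat.cast_le (α := ℝ).2 (le_card_candidatePositions m G y i (by omega))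
    push_cast at this
    linarith
  rw [div_le_div_iff₀ (by exact_mod_cast card_pos.2 ⟨w, hw⟩) hden']
  calc (#hits : ℝ) * (m * n - a - Y)
      ≤ #hits * #(candidatePositions m n G y i) := by gcongr
    _ ≤ #consistent * (m - c : ℕ) := by exact_mod_cast hcount
    _ = _ := mul_comm _ _
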